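/- For any matching μ of an assignment game, the minimum of the subset instability SI(μ, p) over all nonnegative price vectors p : S → ℝ equals OPT − SW(μ). -/

import Mathlib

open Finset

/-- A matching: a partial, injective assignment of buyers to sellers. -/
structure Matching (B S : Type*) where
  toFun : B → Option S
  inj : ∀ i i' j, toFun i = some j → toFun i' = some j → i = i'

variable {B S : Type*} [Fintype B] [Fintype S]

/-- Generated utility of a pair: `a i j = h i j - c j`. -/
def gain (h : B → S → ℝ) (c : S → ℝ) (i : B) (j : S) : ℝ := h i j - c j

/-- Social welfare of a matching. -/
def SW (h : B → S → ℝ) (c : S → ℝ) (μ : Matching B S) : ℝ :=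
  ∑ i : B, ((μ.toFun i).elim 0 (fun j => gain h c i j))

/-- Buyer utility under an allocation. -/
def buyerU (h : B → S → ℝ) (μ : Matching B S) (p : S → ℝ) (i : B) : ℝ :=
  (μ.toFun i).elim 0 (fun j => h i j - p j)

/-- Seller utility under an allocation. -/
def sellerU (c : S → ℝ) (p : S → ℝ) (j : S) : ℝ := p j - c j

/-- A seller is matched under `μ`. -/
def SellerMatched (μ : Matching B S) (j : S) : Prop := ∃ i, μ.toFun i = some j

/-- A valid price vector: nonnegative, and equal to the seller's valuation on
unmatched sellers. -/
def ValidPrices (c : S → ℝ) (μ : Matching B S) (p : S → ℝ) : Prop :=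
  (∀ j, 0 ≤ p j) ∧ (∀ j, ¬ SellerMatched μ j → p j = c j)

/-- Individual rationality of an allocation. -/
def IndivRational (h : B → S → ℝ) (c : S → ℝ) (μ : Matching B S) (p : S → ℝ) : Prop :=
  (∀ i, 0 ≤ buyerU h μ p i) ∧ (∀ j, 0 ≤ sellerU c p j)

/-- Stability of an allocation. -/
def Stable (h : B → S → ℝ) (c : S → ℝ) (μ : Matching B S) (p : S → ℝ) : Prop :=
  IndivRational h c μ p ∧ ∀ i j, gain h c i j ≤ buyerU h μ p i + sellerU c p j

/-- The optimal (maximum) social welfare over all matchings. -/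
noncomputable def OPT (h : B → S → ℝ) (c : S → ℝ) : ℝ :=
  sSup (Set.range (SW h c))

/-- `μ'` is a matching within the sub-market `(B', S')`. -/
def Within (B' : Finset B) (S' : Finset S) (μ' : Matching B S) : Prop :=
  ∀ i j, μ'.toFun i = some j → i ∈ B' ∧ j ∈ S'

/-- Subset instability of a pair of utility vectors `(u, v)`. -/
noncomputable def SIgen (h : B → S → ℝ) (c : S → ℝ) (u : B → ℝ) (v : S → ℝ) : ℝ :=
  sSup {x | ∃ (B' : Finset B) (S' : Finset S) (μ' : Matching B S),
    Within B' S' μ' ∧ x = SW h c μ' - ((∑ i ∈ B', u i) + (∑ j ∈ S', v j))}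

/-- Subset instability of an allocation. -/
noncomputable def SI (h : B → S → ℝ) (c : S → ℝ) (μ : Matching B S) (p : S → ℝ) : ℝ :=
  SIgen h c (buyerU h μ p) (sellerU c p)

/-! For valid prices the utilities add up to `SW μ`, so the coalition of all agents with an optimal
matching shows `SI ≥ OPT - SW μ`. Conversely, by LP duality for the assignment problem
(Egerváry) there are nonnegative `u`, `v` with `u i + v j ≥ a i j` and `∑ u + ∑ v ≤ OPT`. A cover of
least total value exists by compactness; Hall's condition holds on its tight edges from each side
(a violating set could be lowered), and Mendelsohn–Dulmage merges the two matchings into one tight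
matching of all agents of positive value, whose welfare is `∑ u + ∑ v`. Charging each matched seller
`c j + v j` leaves every buyer at most `u i` and every seller at most `v j`, so any coalition gains
at most the total slack `∑ u + ∑ v - SW μ ≤ OPT - SW μ`. -/

namespace Matching

theorem toFun_injective {B S : Type*} :
    Function.Injective (toFun : Matching B S → B → Option S) := by
  rintro ⟨f, _⟩ ⟨g, _⟩ rfl
  rfl

instance : Finite (Matching B S) := .of_injective _ toFun_injective

instance {B S : Type*} : Inhabited (Matching B S) := ⟨⟨fun _ => none, by simp⟩⟩

open Classical in
noncomputable def ofRel {B S : Type*} (R : B → S → Prop)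
    (hR : ∀ i i' j, R i j → R i' j → i = i') : Matching B S where
  toFun i := if h : ∃ j, R i j then some h.choose else none
  inj i i' j hi hi' := by
    split_ifs at hi hi' with h h'
    exact hR _ _ _ (Option.some_inj.1 hi ▸ h.choose_spec) (Option.some_inj.1 hi' ▸ h'.choose_spec)

theorem ofRel_toFun_eq_some {B S : Type*} {R : B → S → Prop} {hR}
    (hfun : ∀ i j j', R i j → R i j' → j = j') {i : B} {j : S} :
    (ofRel R hR).toFun i = some j ↔ R i j := by
  simp only [ofRel]
  split_ifs with h
  · exact ⟨fun hj => Option.some_inj.1 hj ▸ h.choose_spec,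
      fun hj => congrArg some (hfun _ _ _ h.choose_spec hj)⟩
  · exact ⟨fun hj => absurd hj (by simp), fun hj => absurd ⟨j, hj⟩ h⟩

/-- The Mendelsohn–Dulmage theorem. -/
theorem exists_of_injective {B S : Type*} (E : B → S → Prop) {p : B → Prop} {q : S → Prop}
    (f : Subtype p → S) (hf : Function.Injective f) (hfE : ∀ x, E x.1 (f x))
    (g : Subtype q → B) (hg : Function.Injective g) (hgE : ∀ y, E (g y) y) :
    ∃ ν : Matching B S, (∀ i j, ν.toFun i = some j → E i j) ∧
      (∀ i, p i → ∃ j, ν.toFun i = some j) ∧ ∀ j, q j → SellerMatched ν j := by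
  -- `C` is the set of buyers that keep their `f`-partner; the others take their `g`-partner.
  let Φ : Set (Subtype p) →o Set (Subtype p) :=
    ⟨fun C => {x | ∀ y, g y = x → ∃ x' ∈ C, f x' = y},
      fun C D hCD x hx y hy => (hx y hy).imp fun _ => And.imp_left (@hCD _)⟩
  have hC : Φ Φ.lfp = Φ.lfp := Φ.map_lfp
  set C := Φ.lfp
  let R (i : B) (j : S) : Prop :=
    (∃ x ∈ C, x.1 = i ∧ f x = j) ∨ ∃ y : Subtype q, y.1 = j ∧ g y = i ∧ ∀ x ∈ C, f x ≠ j
  have hfun : ∀ i j j', R i j → R i j' → j = j' := by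
    rintro i j j' (⟨x, hx, rfl, rfl⟩ | ⟨y, rfl, rfl, hy⟩)
      (⟨x', hx', hxx', rfl⟩ | ⟨y', rfl, hyy', hy'⟩)
    · rw [Subtype.ext hxx']
    · rw [← hC] at hx
      obtain ⟨x'', hx'', he⟩ := hx y' hyy'
      exact absurd he (hy' x'' hx'')
    · rw [← hC] at hx'
      obtain ⟨x'', hx'', he⟩ := hx' y hxx'.symm
      exact absurd he (hy x'' hx'')
    · rw [hg hyy']
  have hinj : ∀ i i' j, R i j → R i' j → i = i' := by
    rintro i i' j (⟨x, hx, rfl, rfl⟩ | ⟨y, rfl, rfl, hy⟩)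
      (⟨x', hx', rfl, hxx'⟩ | ⟨y', hyy', rfl, hy'⟩)
    · rw [hf hxx']
    · exact absurd rfl (hy' x hx)
    · exact absurd hxx' (hy x' hx')
    · rw [Subtype.ext hyy']
  refine ⟨ofRel R hinj, fun i j hij => ?_, fun i hi => ?_, fun j hj => ?_⟩
  · obtain ⟨x, -, rfl, rfl⟩ | ⟨y, rfl, rfl, -⟩ := (ofRel_toFun_eq_some hfun).1 hij
    exacts [hfE x, hgE y]
  · simp only [ofRel_toFun_eq_some hfun]
    by_cases hx : ⟨i, hi⟩ ∈ C
    · exact ⟨_, .inl ⟨_, hx, rfl, rfl⟩⟩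
    · rw [← hC] at hx
      change ¬ ∀ y, g y = i → ∃ x ∈ C, f x = y at hx
      push Not at hx
      obtain ⟨y, hy, hyC⟩ := hx
      exact ⟨y, .inr ⟨y, rfl, hy, hyC⟩⟩
  · simp only [SellerMatched, ofRel_toFun_eq_some hfun]
    by_cases hy : ∃ x ∈ C, f x = j
    · obtain ⟨x, hx, rfl⟩ := hy
      exact ⟨x, .inl ⟨x, hx, rfl, rfl⟩⟩
    · push Not at hy
      exact ⟨g ⟨j, hj⟩, .inr ⟨⟨j, hj⟩, rfl, rfl, hy⟩⟩

variable (μ : Matching B S)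

open Classical in
noncomputable def buyers : Finset B := univ.filter fun i => (μ.toFun i).isSome

open Classical in
noncomputable def sellers : Finset S := univ.filter (SellerMatched μ)

@[simp]
theorem mem_buyers {i : B} : i ∈ μ.buyers ↔ ∃ j, μ.toFun i = some j := by
  classical
  simp [buyers, Option.isSome_iff_exists]

omit [Fintype B] in
@[simp]
theorem mem_sellers {j : S} : j ∈ μ.sellers ↔ SellerMatched μ j := by
  classical
  simp [sellers]

def weight (w : B → S → ℝ) : ℝ := ∑ i, (μ.toFun i).elim 0 (w i)

omit [Fintype S] in
theorem weight_add (w w' : B → S → ℝ) : μ.weight (w + w') = μ.weight w + μ.weight w' := by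
  rw [weight, weight, weight, ← sum_add_distrib]
  refine sum_congr rfl fun i _ => ?_
  cases μ.toFun i <;> simp

omit [Fintype S] in
theorem weight_mono {w w' : B → S → ℝ} (hw : ∀ i j, μ.toFun i = some j → w i j ≤ w' i j) :
    μ.weight w ≤ μ.weight w' := by
  refine sum_le_sum fun i _ => ?_
  cases hi : μ.toFun i
  · rfl
  · exact hw _ _ hi

omit [Fintype S] in
theorem weight_eq_sum_buyers (u : B → ℝ) : μ.weight (fun i _ => u i) = ∑ i ∈ μ.buyers, u i := by
  classical
  rw [weight, buyers, sum_filter]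
  refine sum_congr rfl fun i _ => ?_
  cases μ.toFun i <;> simp

theorem weight_eq_sum_sellers (v : S → ℝ) :
    μ.weight (fun _ j => v j) = ∑ j ∈ μ.sellers, v j := by
  classical
  have hbuyer (i : B) : (μ.toFun i).elim 0 v = ∑ j, if μ.toFun i = some j then v j else 0 := by
    cases μ.toFun i <;> simp
  have hseller (j : S) : (∑ i, if μ.toFun i = some j then v j else 0) =
      if SellerMatched μ j then v j else 0 := by
    split_ifs with hj
    · obtain ⟨i, hi⟩ := hj
      rw [sum_eq_single i (fun i' _ hi' => if_neg fun h => hi' (μ.inj _ _ _ h hi)) (by simp)]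
      exact if_pos hi
    · exact sum_eq_zero fun i _ => if_neg fun hi => hj ⟨i, hi⟩
  simp only [weight, hbuyer]
  rw [sum_comm, sellers, sum_filter]
  exact sum_congr rfl fun j _ => hseller j

theorem weight_add_eq_sum (u : B → ℝ) (v : S → ℝ) :
    μ.weight (fun i j => u i + v j) = ∑ i ∈ μ.buyers, u i + ∑ j ∈ μ.sellers, v j := by
  rw [← weight_eq_sum_buyers, ← weight_eq_sum_sellers, ← weight_add]
  rfl

end Matching

theorem Within.buyers_subset {B' : Finset B} {S' : Finset S} {μ : Matching B S}
    (hμ : Within B' S' μ) : μ.buyers ⊆ B' := fun i hi => by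
  obtain ⟨j, hj⟩ := μ.mem_buyers.1 hi
  exact (hμ i j hj).1

omit [Fintype B] in
theorem Within.sellers_subset {B' : Finset B} {S' : Finset S} {μ : Matching B S}
    (hμ : Within B' S' μ) : μ.sellers ⊆ S' := fun j hj => by
  obtain ⟨i, hi⟩ := μ.mem_sellers.1 hj
  exact (hμ i j hi).2

omit [Fintype S] in
theorem SW_eq_weight (h : B → S → ℝ) (c : S → ℝ) (μ : Matching B S) :
    SW h c μ = μ.weight (gain h c) := rfl

section Instability

variable (h : B → S → ℝ) (c : S → ℝ)

theorem SW_le_OPT (ν : Matching B S) : SW h c ν ≤ OPT h c :=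
  le_csSup (Set.finite_range _).bddAbove ⟨ν, rfl⟩

theorem exists_SW_eq_OPT : ∃ ν : Matching B S, SW h c ν = OPT h c :=
  (Set.range_nonempty _).csSup_mem (Set.finite_range _)

variable {h c} {u : B → ℝ} {v : S → ℝ}

theorem le_SIgen {B' : Finset B} {S' : Finset S} {μ' : Matching B S} (hμ' : Within B' S' μ') :
    SW h c μ' - (∑ i ∈ B', u i + ∑ j ∈ S', v j) ≤ SIgen h c u v := by
  refine le_csSup (Set.Finite.bddAbove ?_) ⟨B', S', μ', hμ', rfl⟩
  refine (Set.finite_range fun t : Finset B × Finset S × Matching B S =>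
    SW h c t.2.2 - (∑ i ∈ t.1, u i + ∑ j ∈ t.2.1, v j)).subset ?_
  rintro _ ⟨B', S', μ', -, rfl⟩
  exact ⟨(B', S', μ'), rfl⟩

omit [Fintype S] in
theorem SIgen_le {M : ℝ} (hM : ∀ B' S' μ', Within B' S' μ' →
    SW h c μ' - (∑ i ∈ B', u i + ∑ j ∈ S', v j) ≤ M) : SIgen h c u v ≤ M := by
  refine csSup_le ⟨_, ∅, ∅, default, fun _ _ h => (Option.some_ne_none _ h.symm).elim, rfl⟩ ?_
  rintro _ ⟨B', S', μ', hμ', rfl⟩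
  exact hM B' S' μ' hμ'

theorem OPT_sub_le_SIgen : OPT h c - (∑ i, u i + ∑ j, v j) ≤ SIgen h c u v := by
  obtain ⟨ν, hν⟩ := exists_SW_eq_OPT h c
  rw [← hν]
  exact le_SIgen fun _ _ _ => ⟨mem_univ _, mem_univ _⟩

theorem sum_buyerU_add_sum_sellerU {μ : Matching B S} {p : S → ℝ}
    (hp : ∀ j, ¬ SellerMatched μ j → p j = c j) :
    ∑ i, buyerU h μ p i + ∑ j, sellerU c p j = SW h c μ := by
  have hsellers : ∑ j, sellerU c p j = μ.weight fun _ j => p j - c j := by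
    rw [μ.weight_eq_sum_sellers]
    refine (sum_subset (subset_univ _) fun j _ hj => ?_).symm
    rw [sellerU, hp j (by simpa using hj), sub_self]
  change μ.weight (fun i j => h i j - p j) + _ = _
  rw [hsellers, SW_eq_weight, ← Matching.weight_add]
  exact congrArg μ.weight (by ext i j; simp only [Pi.add_apply, gain]; ring)

end Instability

/-- `(u, v)` is a nonnegative solution of the dual of the assignment LP with weights `w`. -/
def IsWeightCover (w : B → S → ℝ) (u : B → ℝ) (v : S → ℝ) : Prop :=
  (∀ i, 0 ≤ u i) ∧ (∀ j, 0 ≤ v j) ∧ ∀ i j, w i j ≤ u i + v j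

def IsMinWeightCover (w : B → S → ℝ) (u : B → ℝ) (v : S → ℝ) : Prop :=
  IsWeightCover w u v ∧
    ∀ u' v', IsWeightCover w u' v' → ∑ i, u i + ∑ j, v j ≤ ∑ i, u' i + ∑ j, v' j

section WeightCover

variable {w : B → S → ℝ} {u : B → ℝ} {v : S → ℝ}

theorem IsWeightCover.weight_le (hcov : IsWeightCover w u v) (ν : Matching B S) :
    ν.weight w ≤ ∑ i ∈ ν.buyers, u i + ∑ j ∈ ν.sellers, v j :=
  (ν.weight_mono fun i j _ => hcov.2.2 i j).trans_eq (ν.weight_add_eq_sum u v)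

omit [Fintype B] [Fintype S] in
theorem IsWeightCover.flip (hcov : IsWeightCover w u v) : IsWeightCover (flip w) v u :=
  ⟨hcov.2.1, hcov.1, fun j i => (hcov.2.2 i j).trans_eq (add_comm _ _)⟩

theorem IsMinWeightCover.flip (hmin : IsMinWeightCover w u v) : IsMinWeightCover (flip w) v u :=
  ⟨hmin.1.flip, fun v' u' hcov' => by
    rw [add_comm, add_comm (∑ j, v' j)]
    exact hmin.2 u' v' hcov'.flip⟩

omit [Fintype B] [Fintype S] in
theorem IsWeightCover.shift [DecidableEq B] [DecidableEq S] (hcov : IsWeightCover w u v)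
    {s : Finset B} {N : Finset S} {ε : ℝ} (hε : 0 ≤ ε) (hεu : ∀ i ∈ s, ε ≤ u i)
    (hεw : ∀ i ∈ s, ∀ j ∉ N, ε ≤ u i + v j - w i j) :
    IsWeightCover w (fun i => u i - if i ∈ s then ε else 0)
      (fun j => v j + if j ∈ N then ε else 0) := by
  refine ⟨fun i => ?_, fun j => ?_, fun i j => ?_⟩
  · have := hcov.1 i
    by_cases hi : i ∈ s
    · simpa [hi] using hεu i hi
    · simpa [hi] using this
  · have := hcov.2.1 j
    dsimp only
    split_ifs <;> linarith
  · have := hcov.2.2 i j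
    by_cases hi : i ∈ s
    · by_cases hj : j ∈ N
      · simp only [hi, hj, if_true]
        linarith
      · have := hεw i hi j hj
        simp only [hi, hj, if_true, if_false]
        linarith
    · simp only [hi, if_false, sub_zero]
      split_ifs <;> linarith

theorem isCompact_setOf_isWeightCover (w : B → S → ℝ) (M : ℝ) :
    IsCompact {x : (B → ℝ) × (S → ℝ) | IsWeightCover w x.1 x.2 ∧ ∑ i, x.1 i + ∑ j, x.2 j ≤ M} := by
  refine (isCompact_Icc (a := 0) (b := (fun _ => M, fun _ => M))).of_isClosed_subset ?_ ?_
  · simp only [IsWeightCover, Set.ofPred_and, Set.ofPred_forall]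
    refine .inter (.inter (isClosed_iInter fun i => isClosed_le (by fun_prop) (by fun_prop))
      (.inter (isClosed_iInter fun j => isClosed_le (by fun_prop) (by fun_prop))
        (isClosed_iInter fun i => isClosed_iInter fun j =>
          isClosed_le (by fun_prop) (by fun_prop)))) (isClosed_le (by fun_prop) (by fun_prop))
  · rintro x ⟨⟨hu, hv, -⟩, hx⟩
    refine ⟨⟨hu, hv⟩, fun i => ?_, fun j => ?_⟩
    · calc x.1 i ≤ ∑ i, x.1 i := single_le_sum (fun i _ => hu i) (mem_univ i)
        _ ≤ ∑ i, x.1 i + ∑ j, x.2 j := le_add_of_nonneg_right (sum_nonneg fun j _ => hv j)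
        _ ≤ M := hx
    · calc x.2 j ≤ ∑ j, x.2 j := single_le_sum (fun j _ => hv j) (mem_univ j)
        _ ≤ ∑ i, x.1 i + ∑ j, x.2 j := le_add_of_nonneg_left (sum_nonneg fun i _ => hu i)
        _ ≤ M := hx

theorem exists_isMinWeightCover (w : B → S → ℝ) : ∃ u v, IsMinWeightCover w u v := by
  let u₀ (i : B) : ℝ := ∑ j, |w i j|
  have h₀ : IsWeightCover w u₀ 0 :=
    ⟨fun i => sum_nonneg fun j _ => abs_nonneg _, fun _ => le_rfl, fun i j => by
      simpa using (le_abs_self (w i j)).trans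
        (single_le_sum (fun j _ => abs_nonneg (w i j)) (mem_univ j))⟩
  obtain ⟨x, hx, hxmin⟩ := (isCompact_setOf_isWeightCover w (∑ i, u₀ i)).exists_isMinOn
    (f := fun x => ∑ i, x.1 i + ∑ j, x.2 j) ⟨(u₀, 0), h₀, by simp⟩ (by fun_prop)
  refine ⟨x.1, x.2, hx.1, fun u v huv => ?_⟩
  by_cases hle : ∑ i, u i + ∑ j, v j ≤ ∑ i, u₀ i
  · exact hxmin (a := (u, v)) ⟨huv, hle⟩
  · exact hx.2.trans (le_of_not_ge hle)

open Topology in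
theorem IsMinWeightCover.card_le_card_biUnion [DecidableEq S] (hmin : IsMinWeightCover w u v)
    {s : Finset B} (hs : ∀ i ∈ s, 0 < u i) :
    #s ≤ #(s.biUnion fun i => univ.filter fun j => w i j = u i + v j) := by
  classical
  set N := s.biUnion fun i => univ.filter fun j => w i j = u i + v j
  by_contra! hN
  have hslack : ∀ i ∈ s, ∀ j ∉ N, 0 < u i + v j - w i j := fun i hi j hj =>
    sub_pos.2 <| (hmin.1.2.2 i j).lt_of_ne fun h =>
      hj (mem_biUnion.2 ⟨i, hi, mem_filter.2 ⟨mem_univ _, h⟩⟩)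
  have hsmall : ∀ᶠ ε in 𝓝[>] (0 : ℝ),
      ∀ i ∈ s, ε ≤ u i ∧ ∀ j, j ∉ N → ε ≤ u i + v j - w i j := by
    simp only [Filter.eventually_all_finset, Filter.eventually_and, Filter.eventually_all]
    refine fun i hi => ⟨?_, fun j hj => ?_⟩
    · filter_upwards [Ioo_mem_nhdsGT (hs i hi)] with ε hε using hε.2.le
    · filter_upwards [Ioo_mem_nhdsGT (hslack i hi j hj)] with ε hε using hε.2.le
  obtain ⟨ε, hε, hεpos⟩ := (hsmall.and self_mem_nhdsWithin).exists
  -- lowering `u` by `ε` on `s` and raising `v` by `ε` on `N` would give a cheaper cover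
  have := hmin.2 _ _ (hmin.1.shift hεpos.le (fun i hi => (hε i hi).1) fun i hi => (hε i hi).2)
  have hcard : 0 < ((#s : ℝ) - #N) * ε := mul_pos (sub_pos.2 (by exact_mod_cast hN)) hεpos
  simp only [sum_sub_distrib, sum_add_distrib, sum_ite_mem, univ_inter, sum_const,
    nsmul_eq_mul] at this
  linarith

theorem IsMinWeightCover.exists_injective (hmin : IsMinWeightCover w u v) :
    ∃ f : {i // 0 < u i} → S, Function.Injective f ∧ ∀ x, w x.1 (f x) = u x + v (f x) := by
  classical
  obtain ⟨f, hf, hfT⟩ := (all_card_le_biUnion_card_iff_exists_injective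
    fun x : {i // 0 < u i} => univ.filter fun j => w x j = u x + v j).1 fun s => by
      simpa [card_image_of_injective _ Subtype.val_injective, image_biUnion] using
        hmin.card_le_card_biUnion (s := s.image Subtype.val) (by
          simp only [mem_image]; rintro _ ⟨x, -, rfl⟩; exact x.2)
  exact ⟨f, hf, fun x => (mem_filter.1 (hfT x)).2⟩

theorem exists_isWeightCover_sum_le_weight (w : B → S → ℝ) :
    ∃ u v, IsWeightCover w u v ∧ ∃ ν : Matching B S, ∑ i, u i + ∑ j, v j ≤ ν.weight w := by
  obtain ⟨u, v, hmin⟩ := exists_isMinWeightCover w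
  obtain ⟨f, hf, hfw⟩ := hmin.exists_injective
  obtain ⟨g, hg, hgw⟩ := hmin.flip.exists_injective
  obtain ⟨ν, hνw, hνu, hνv⟩ := Matching.exists_of_injective (fun i j => w i j = u i + v j)
    f hf hfw g hg fun y => (hgw y).trans (add_comm _ _)
  have hu : ∑ i, u i = ∑ i ∈ ν.buyers, u i := by
    refine (sum_subset (subset_univ _) fun i _ hi => ?_).symm
    refine ((hmin.1.1 i).eq_or_lt.resolve_right fun hpos => hi ?_).symm
    exact ν.mem_buyers.2 (hνu i hpos)
  have hv : ∑ j, v j = ∑ j ∈ ν.sellers, v j := by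
    refine (sum_subset (subset_univ _) fun j _ hj => ?_).symm
    refine ((hmin.1.2.1 j).eq_or_lt.resolve_right fun hpos => hj ?_).symm
    exact ν.mem_sellers.2 (hνv j hpos)
  refine ⟨u, v, hmin.1, ν, ?_⟩
  rw [hu, hv, ← ν.weight_add_eq_sum]
  exact ν.weight_mono fun i j hij => (hνw i j hij).ge

end WeightCover

section Prices

variable {h : B → S → ℝ} {c : S → ℝ} {u : B → ℝ} {v : S → ℝ}

theorem SIgen_le_of_isWeightCover {u' : B → ℝ} {v' : S → ℝ}
    (hcov : IsWeightCover (gain h c) u v) (hu : u' ≤ u) (hv : v' ≤ v) :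
    SIgen h c u' v' ≤ (∑ i, u i + ∑ j, v j) - (∑ i, u' i + ∑ j, v' j) := by
  refine SIgen_le fun B' S' μ' hμ' => ?_
  have hSW : SW h c μ' ≤ ∑ i ∈ B', u i + ∑ j ∈ S', v j :=
    (hcov.weight_le μ').trans (add_le_add
      (sum_le_sum_of_subset_of_nonneg hμ'.buyers_subset fun i _ _ => hcov.1 i)
      (sum_le_sum_of_subset_of_nonneg hμ'.sellers_subset fun j _ _ => hcov.2.1 j))
  calc SW h c μ' - (∑ i ∈ B', u' i + ∑ j ∈ S', v' j)
      ≤ ∑ i ∈ B', (u i - u' i) + ∑ j ∈ S', (v j - v' j) := by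
        rw [sum_sub_distrib, sum_sub_distrib]; linarith
    _ ≤ ∑ i, (u i - u' i) + ∑ j, (v j - v' j) := add_le_add
        (sum_le_sum_of_subset_of_nonneg (subset_univ _) fun i _ _ => sub_nonneg.2 (hu i))
        (sum_le_sum_of_subset_of_nonneg (subset_univ _) fun j _ _ => sub_nonneg.2 (hv j))
    _ = _ := by rw [sum_sub_distrib, sum_sub_distrib]; ring

omit [Fintype B] [Fintype S] in
/-- Each matched seller `j` is charged `c j + v j`. -/
theorem exists_validPrices_le (hc : ∀ j, 0 ≤ c j) (hcov : IsWeightCover (gain h c) u v)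
    (μ : Matching B S) : ∃ p, ValidPrices c μ p ∧ buyerU h μ p ≤ u ∧ sellerU c p ≤ v := by
  classical
  refine ⟨fun j => if SellerMatched μ j then c j + v j else c j,
    ⟨fun j => ?_, fun j hj => if_neg hj⟩, fun i => ?_, fun j => ?_⟩
  · dsimp only
    split_ifs
    exacts [add_nonneg (hc j) (hcov.2.1 j), hc j]
  · cases hi : μ.toFun i with
    | none => simpa [buyerU, hi] using hcov.1 i
    | some j =>
      have hj : SellerMatched μ j := ⟨i, hi⟩
      have := hcov.2.2 i j
      simp only [buyerU, hi, Option.elim, hj, if_true, gain] at this ⊢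
      linarith
  · simp only [sellerU]
    split_ifs
    exacts [by simp, by simpa using hcov.2.1 j]

end Prices

theorem min_SI_over_prices_eq_opt_gap_general
    {B S : Type*} [Fintype B] [Fintype S]
    (h : B → S → ℝ) (c : S → ℝ)
    (hc : ∀ j, 0 ≤ c j)
    (μ : Matching B S) :
    sInf {x | ∃ p : S → ℝ, ValidPrices c μ p ∧ x = SI h c μ p}
      = OPT h c - SW h c μ := by
  have hlower (p : S → ℝ) (hp : ValidPrices c μ p) : OPT h c - SW h c μ ≤ SI h c μ p := by
    have := OPT_sub_le_SIgen (h := h) (c := c) (u := buyerU h μ p) (v := sellerU c p)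
    rwa [sum_buyerU_add_sum_sellerU hp.2] at this
  obtain ⟨u, v, hcov, ν, hν⟩ := exists_isWeightCover_sum_le_weight (gain h c)
  have hOPT : ∑ i, u i + ∑ j, v j ≤ OPT h c := hν.trans (SW_le_OPT h c ν)
  obtain ⟨p, hp, hpu, hpv⟩ := exists_validPrices_le hc hcov μ
  have hupper : SI h c μ p ≤ OPT h c - SW h c μ := by
    calc SI h c μ p
        ≤ (∑ i, u i + ∑ j, v j) - (∑ i, buyerU h μ p i + ∑ j, sellerU c p j) :=
          SIgen_le_of_isWeightCover hcov hpu hpv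
      _ ≤ OPT h c - SW h c μ := by
          rw [sum_buyerU_add_sum_sellerU hp.2]
          linarith
  refine IsLeast.csInf_eq ⟨⟨p, hp, (hupper.antisymm (hlower p hp)).symm⟩, ?_⟩
  rintro _ ⟨p', hp', rfl⟩
  exact hlower p' hp'

/-- Minimizing the subset instability over price vectors yields exactly the
optimality gap of the matching. -/
theorem min_SI_over_prices_eq_opt_gap
    {B S : Type*} [Fintype B] [Fintype S]
    (h : B → S → ℝ) (c : S → ℝ)
    (hh : ∀ i j, 0 ≤ h i j) (hc : ∀ j, 0 ≤ c j)
    (ha : ∀ i j, 0 ≤ gain h c i j)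
    (μ : Matching B S) :
    sInf {x | ∃ p : S → ℝ, ValidPrices c μ p ∧ x = SI h c μ p}
      = OPT h c - SW h c μ :=
  min_SI_over_prices_eq_opt_gap_general h c hc μ
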